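/- arXiv:math/0505301 — 5 statements merged into one kernel-verified Lean document; each statement's English description precedes it below -/
import Mathlib

section
/- For every v ∈ B_m (a normalized nonzero sign vector), ⟨v, u⟩ ≤ 1, where u_i = √i − √(i−1). Moreover equality holds if and only if v = v_k for some k ∈ {1, …, m}. -/
open scoped RealInnerProductSpace BigOperators
noncomputable section

def A (m : ℕ) : Set (EuclideanSpace ℝ (Fin m)) :=
  {v | (∀ i, v i = -1 ∨ v i = 0 ∨ v i = 1) ∧ v ≠ 0}

def B (m : ℕ) : Set (EuclideanSpace ℝ (Fin m)) :=
  (fun v => ‖v‖⁻¹ • v) '' A m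

def vk (m : ℕ) (k : Fin m) : EuclideanSpace ℝ (Fin m) :=
  WithLp.toLp 2 (fun i => if i ≤ k then (Real.sqrt ((k : ℕ) + 1))⁻¹ else 0)

def u (m : ℕ) : EuclideanSpace ℝ (Fin m) :=
  WithLp.toLp 2 (fun i => Real.sqrt ((i : ℕ) + 1) - Real.sqrt (i : ℕ))

/-! Write `v = ‖w‖⁻¹ • w` with `w` a sign vector supported on `S`, so that `‖w‖ = √#S` and
`⟪w, u⟫ ≤ ∑ i ∈ S, u i`. Since `u i = (√(i + 1) + √i)⁻¹` is strictly decreasing, among index sets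
of a given size the initial segment maximises `∑ i ∈ S, u i`, and over the initial segment the sum
telescopes to `√#S`. Equality forces `w = 1` on `S` and `S` to be an initial segment, i.e. `v = vk`. -/

open Finset

section AntitoneSum

variable {M : Type*} [AddCommMonoid M] [PartialOrder M] [IsOrderedCancelAddMonoid M] {f : ℕ → M}

theorem Finset.sum_le_sum_range_card_of_antitone (hf : Antitone f) (s : Finset ℕ) :
    ∑ i ∈ s, f i ≤ ∑ i ∈ range #s, f i := by
  induction s using Finset.induction_on_max with
  | empty => simp
  | insert a s has ih =>
    have hsa : #s ≤ a := by simpa using card_le_card fun x hx => mem_range.2 (has x hx)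
    rw [sum_insert fun h => (has a h).false, card_insert_of_notMem fun h => (has a h).false,
      sum_range_succ, add_comm]
    exact add_le_add ih (hf hsa)

theorem Finset.sum_lt_sum_range_card_of_strictAnti (hf : StrictAnti f) {s : Finset ℕ}
    (hs : s ≠ range #s) : ∑ i ∈ s, f i < ∑ i ∈ range #s, f i := by
  induction s using Finset.induction_on_max with
  | empty => simp at hs
  | insert a s has ih =>
    have has' : a ∉ s := fun h => (has a h).false
    have hsa : #s ≤ a := by simpa using card_le_card fun x hx => mem_range.2 (has x hx)
    rw [sum_insert has', card_insert_of_notMem has', sum_range_succ, add_comm]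
    by_cases hrange : s = range #s
    · have hlt : #s < a := hsa.lt_of_ne fun h => hs (by rw [card_insert_of_notMem has',
        range_add_one, ← h, ← hrange])
      rw [← hrange]
      exact add_lt_add_right (hf hlt) _
    · exact add_lt_add_of_lt_of_le (ih hrange) (hf.antitone hsa)

theorem Finset.sum_eq_sum_range_card_iff_of_strictAnti (hf : StrictAnti f) (s : Finset ℕ) :
    ∑ i ∈ s, f i = ∑ i ∈ range #s, f i ↔ s = range #s := by
  refine ⟨fun h => ?_, fun h => by rw [← h]⟩
  by_contra hs
  exact (sum_lt_sum_range_card_of_strictAnti hf hs).ne h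

end AntitoneSum

namespace Real

theorem sqrt_add_one_sub_sqrt_eq_inv {x : ℝ} (hx : 0 ≤ x) :
    √(x + 1) - √x = (√(x + 1) + √x)⁻¹ := by
  refine eq_inv_of_mul_eq_one_left ?_
  rw [mul_comm, ← sq_sub_sq, Real.sq_sqrt (by linarith), Real.sq_sqrt hx]
  ring

theorem sqrt_add_one_sub_sqrt_pos {x : ℝ} (hx : 0 ≤ x) : 0 < √(x + 1) - √x := by
  rw [sqrt_add_one_sub_sqrt_eq_inv hx]
  positivity

theorem strictAnti_sqrt_add_one_sub_sqrt : StrictAnti fun n : ℕ => √(n + 1) - √n := by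
  intro a b hab
  simp only [sqrt_add_one_sub_sqrt_eq_inv (Nat.cast_nonneg _)]
  have hab' : (a : ℝ) < b := by exact_mod_cast hab
  gcongr

theorem sum_range_sqrt_add_one_sub_sqrt (n : ℕ) :
    ∑ i ∈ range n, (√(i + 1) - √i) = √n := by
  simpa using sum_range_sub (fun i : ℕ => √i) n

end Real

variable {m : ℕ}

theorem u_pos (i : Fin m) : 0 < u m i :=
  Real.sqrt_add_one_sub_sqrt_pos (Nat.cast_nonneg _)

theorem sum_u_eq_sum_map_val (S : Finset (Fin m)) :
    ∑ i ∈ S, u m i = ∑ n ∈ S.map Fin.valEmbedding, (√(n + 1) - √n) := by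
  rw [sum_map]
  rfl

theorem sum_u_le_sqrt_card (S : Finset (Fin m)) : ∑ i ∈ S, u m i ≤ √(#S : ℝ) := by
  rw [sum_u_eq_sum_map_val, ← card_map Fin.valEmbedding, ← Real.sum_range_sqrt_add_one_sub_sqrt]
  exact sum_le_sum_range_card_of_antitone Real.strictAnti_sqrt_add_one_sub_sqrt.antitone _

theorem map_val_eq_range_card_iff (S : Finset (Fin m)) :
    S.map Fin.valEmbedding = range #S ↔ ∀ i : Fin m, i ∈ S ↔ (i : ℕ) < #S := by
  constructor
  · intro h i
    rw [← mem_range, ← h]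
    exact (mem_map' Fin.valEmbedding).symm
  · intro h
    ext n
    have hSm : #S ≤ m := (card_le_univ S).trans_eq (Fintype.card_fin m)
    simp only [mem_map, Fin.valEmbedding_apply, mem_range]
    refine ⟨fun ⟨i, hi, hin⟩ => hin ▸ (h i).1 hi, fun hn => ⟨⟨n, by omega⟩, (h _).2 hn, rfl⟩⟩

theorem sum_u_eq_sqrt_card_iff (S : Finset (Fin m)) :
    ∑ i ∈ S, u m i = √(#S : ℝ) ↔ ∀ i : Fin m, i ∈ S ↔ (i : ℕ) < #S := by
  rw [sum_u_eq_sum_map_val, ← map_val_eq_range_card_iff, ← card_map Fin.valEmbedding,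
    ← Real.sum_range_sqrt_add_one_sub_sqrt]
  exact sum_eq_sum_range_card_iff_of_strictAnti Real.strictAnti_sqrt_add_one_sub_sqrt _

section SignVector

variable {w : EuclideanSpace ℝ (Fin m)}

theorem norm_eq_sqrt_card_support_of_sign (hw : ∀ i, w i = -1 ∨ w i = 0 ∨ w i = 1) :
    ‖w‖ = √(#{i | w i ≠ 0} : ℝ) := by
  have hsq : ∀ i, ‖w i‖ ^ 2 = if w i ≠ 0 then 1 else 0 := by
    intro i
    rcases hw i with h | h | h <;> simp [h]
  rw [EuclideanSpace.norm_eq]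
  simp_rw [hsq, sum_boole]

theorem inner_eq_sum_support (w x : EuclideanSpace ℝ (Fin m)) :
    ⟪w, x⟫ = ∑ i ∈ {i | w i ≠ 0}, w i * x i := by
  rw [sum_filter_of_ne fun i _ h => left_ne_zero_of_mul h]
  simp [PiLp.inner_apply, mul_comm]

theorem inner_le_sum_support_of_sign (hw : ∀ i, w i = -1 ∨ w i = 0 ∨ w i = 1)
    {x : EuclideanSpace ℝ (Fin m)} (hx : ∀ i, 0 ≤ x i) :
    ⟪w, x⟫ ≤ ∑ i ∈ {i | w i ≠ 0}, x i := by
  rw [inner_eq_sum_support]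
  gcongr with i
  exact mul_le_of_le_one_left (hx i) (by rcases hw i with h | h | h <;> simp [h])

theorem inner_eq_sum_support_iff_of_sign (hw : ∀ i, w i = -1 ∨ w i = 0 ∨ w i = 1)
    {x : EuclideanSpace ℝ (Fin m)} (hx : ∀ i, 0 < x i) :
    ⟪w, x⟫ = ∑ i ∈ {i | w i ≠ 0}, x i ↔ ∀ i, w i ≠ 0 → w i = 1 := by
  rw [inner_eq_sum_support, sum_eq_sum_iff_of_le fun i _ =>
    mul_le_of_le_one_left (hx i).le (by rcases hw i with h | h | h <;> simp [h])]
  simp [mul_eq_right₀ (hx _).ne']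

end SignVector

theorem sum_Iic_u (k : Fin m) : ∑ i ∈ Iic k, u m i = √((k : ℕ) + 1) := by
  have h := (sum_u_eq_sqrt_card_iff (Iic k)).2 fun i => by
    rw [mem_Iic, Fin.card_Iic, Fin.le_iff_val_le_val]
    omega
  rwa [Fin.card_Iic, Nat.cast_add_one] at h

theorem inner_vk_u (k : Fin m) : ⟪vk m k, u m⟫ = 1 := by
  have hpos : (0 : ℝ) < √((k : ℕ) + 1) := by positivity
  simp only [PiLp.inner_apply, vk, RCLike.inner_apply, conj_trivial, mul_ite, mul_zero]
  rw [← sum_filter, filter_ge_eq_Iic, ← sum_mul, sum_Iic_u, mul_inv_cancel₀ hpos.ne']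

theorem inv_norm_smul_eq_vk {w : EuclideanSpace ℝ (Fin m)} (k : Fin m)
    (hw : ∀ i, w i = if i ≤ k then 1 else 0) : ‖w‖⁻¹ • w = vk m k := by
  have hnorm : ‖w‖ = √((k : ℕ) + 1) := by
    rw [norm_eq_sqrt_card_support_of_sign fun i => by rw [hw i]; split_ifs <;> simp]
    simp [hw, filter_ge_eq_Iic]
  ext i
  simp [vk, hw i, hnorm]

theorem stmt2_general (m : ℕ) (v : EuclideanSpace ℝ (Fin m)) (hv : v ∈ B m) :
    ⟪v, u m⟫ ≤ 1 ∧ (⟪v, u m⟫ = 1 ↔ ∃ k : Fin m, v = vk m k) := by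
  obtain ⟨w, ⟨hw, hw0⟩, rfl⟩ := hv
  set S : Finset (Fin m) := {i | w i ≠ 0} with hS
  have hnorm : ‖w‖ = √(#S : ℝ) := norm_eq_sqrt_card_support_of_sign hw
  have hnorm_pos : 0 < √(#S : ℝ) := hnorm ▸ norm_pos_iff.2 hw0
  have hinner : ⟪‖w‖⁻¹ • w, u m⟫ = ⟪w, u m⟫ / √(#S : ℝ) := by
    rw [real_inner_smul_left, hnorm, inv_mul_eq_div]
  have hle₁ : ⟪w, u m⟫ ≤ ∑ i ∈ S, u m i := inner_le_sum_support_of_sign hw fun i => (u_pos i).le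
  have hle₂ : ∑ i ∈ S, u m i ≤ √(#S : ℝ) := sum_u_le_sqrt_card S
  refine ⟨?_, fun h => ?_, fun ⟨k, hk⟩ => by rw [hk, inner_vk_u]⟩
  · rw [hinner, div_le_one hnorm_pos]
    exact hle₁.trans hle₂
  rw [hinner, div_eq_one_iff_eq hnorm_pos.ne'] at h
  have hones := (inner_eq_sum_support_iff_of_sign hw u_pos).1 (by linarith)
  have hprefix := (sum_u_eq_sqrt_card_iff S).1 (by linarith)
  have hS_pos : 0 < #S := by simpa using hnorm_pos
  have hS_le : #S ≤ m := (card_le_univ S).trans_eq (Fintype.card_fin m)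
  obtain ⟨k, hk⟩ : ∃ k : Fin m, (k : ℕ) + 1 = #S := ⟨⟨#S - 1, by omega⟩, by simp only; omega⟩
  refine ⟨k, inv_norm_smul_eq_vk k fun i => ?_⟩
  have hiS : w i ≠ 0 ↔ i ≤ k := by
    rw [Fin.le_iff_val_le_val, ← Nat.lt_add_one_iff, hk, ← hprefix, hS, mem_filter_univ]
  split_ifs with hik
  · exact hones i (hiS.2 hik)
  · exact not_not.1 (mt hiS.1 hik)

theorem stmt2 (m : ℕ) (hm : 2 ≤ m) (v : EuclideanSpace ℝ (Fin m)) (hv : v ∈ B m) :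
    ⟪v, u m⟫ ≤ 1 ∧ (⟪v, u m⟫ = 1 ↔ ∃ k : Fin m, v = vk m k) :=
  stmt2_general m v hv
end
end

section
/- For every m ≥ 2, (1/4)·log m < Σ_{k=1}^m 1/(√k + √(k−1))² < (1/4)·log m + 5/4. -/
open scoped BigOperators

private lemma denom_pos (k : ℕ) : (0:ℝ) < (Real.sqrt (k + 1) + Real.sqrt k) ^ 2 := by
  have h1 : (0:ℝ) < Real.sqrt (k+1) := Real.sqrt_pos.mpr (by positivity)
  have h2 : (0:ℝ) ≤ Real.sqrt k := Real.sqrt_nonneg _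
  nlinarith

private lemma term_lb (k : ℕ) : 1 / (4 * ((k:ℝ) + 1)) ≤ 1 / (Real.sqrt (k + 1) + Real.sqrt k) ^ 2 := by
  have hd := denom_pos k
  apply one_div_le_one_div_of_le hd
  have h1 : Real.sqrt k ≤ Real.sqrt (k+1) := Real.sqrt_le_sqrt (by linarith)
  have h2 : Real.sqrt (k+1) ^ 2 = (k:ℝ) + 1 := Real.sq_sqrt (by positivity)
  nlinarith [Real.sqrt_nonneg (k:ℝ), Real.sqrt_nonneg ((k:ℝ)+1)]

private lemma term_ub (k : ℕ) (hk : 1 ≤ k) :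
    1 / (Real.sqrt (k + 1) + Real.sqrt k) ^ 2 ≤ 1 / (4 * (k:ℝ)) := by
  have hd := denom_pos k
  have hk' : (1:ℝ) ≤ (k:ℝ) := by exact_mod_cast hk
  apply one_div_le_one_div_of_le (by linarith)
  have h1 : Real.sqrt k ≤ Real.sqrt (k+1) := Real.sqrt_le_sqrt (by linarith)
  have h2 : Real.sqrt k ^ 2 = (k:ℝ) := Real.sq_sqrt (by positivity)
  nlinarith [Real.sqrt_nonneg (k:ℝ)]

private lemma harmonic_cast (n : ℕ) :
    ((harmonic n : ℚ) : ℝ) = ∑ k ∈ Finset.range n, 1 / (4 * ((k:ℝ) + 1)) * 4 := by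
  rw [harmonic]
  push_cast
  apply Finset.sum_congr rfl
  intro k _
  field_simp

theorem stmt4 (m : ℕ) (hm : 2 ≤ m) :
    (1 / 4) * Real.log m < ∑ k ∈ Finset.range m, 1 / (Real.sqrt (k + 1) + Real.sqrt k) ^ 2 ∧
    ∑ k ∈ Finset.range m, 1 / (Real.sqrt (k + 1) + Real.sqrt k) ^ 2
      < (1 / 4) * Real.log m + 5 / 4 := by
  obtain ⟨n, rfl⟩ : ∃ n, m = n + 1 := ⟨m - 1, by omega⟩
  have hn : 1 ≤ n := by omega
  constructor
  · -- lower bound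
    have h1 : Real.log (n+1 : ℕ) < Real.log ((n:ℝ)+1+1) := by
      apply Real.log_lt_log (by positivity)
      push_cast; linarith
    have h2 : Real.log ((n:ℝ)+1+1) ≤ ((harmonic (n+1) : ℚ) : ℝ) := by
      have := log_add_one_le_harmonic (n+1)
      push_cast at this ⊢
      linarith
    have h3 : ∑ k ∈ Finset.range (n+1), 1 / (4 * ((k:ℝ) + 1))
        ≤ ∑ k ∈ Finset.range (n+1), 1 / (Real.sqrt (k + 1) + Real.sqrt k) ^ 2 :=
      Finset.sum_le_sum fun k _ => term_lb k
    have h4 := harmonic_cast (n+1)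
    rw [← Finset.sum_mul] at h4
    nlinarith [h3]
  · -- upper bound
    rw [Finset.sum_range_succ']
    have h0 : 1 / (Real.sqrt ((0:ℕ) + 1) + Real.sqrt (0:ℕ)) ^ 2 = 1 := by
      norm_num
    rw [h0]
    have h3 : ∑ k ∈ Finset.range n, 1 / (Real.sqrt ((k+1 : ℕ) + 1) + Real.sqrt (k+1 : ℕ)) ^ 2
        ≤ ∑ k ∈ Finset.range n, 1 / (4 * ((k:ℝ) + 1)) := by
      apply Finset.sum_le_sum
      intro k _
      have := term_ub (k+1) (by omega)
      push_cast at this ⊢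
      convert this using 3 <;> push_cast <;> ring
    have h4 := harmonic_cast n
    rw [← Finset.sum_mul] at h4
    have h5 : ((harmonic n : ℚ) : ℝ) ≤ 1 + Real.log n := harmonic_le_one_add_log n
    have h6 : Real.log n < Real.log (n+1 : ℕ) := by
      apply Real.log_lt_log (by exact_mod_cast hn)
      push_cast; linarith
    nlinarith [h3]
end

section
/- If w ∈ ℝ^m satisfies w_1 > w_2 > ⋯ > w_m > 0, then some positive scalar multiple of w lies in the interior of the simplex S = conv{v_1, …, v_m}, i.e., is a convex combination of v_1, …, v_m with all coefficients strictly positive. -/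
/-!
With indices `0, …, m-1` as in `vk`, the `i`-th coordinate of `∑ k, d k • vk m k` is
`∑_{k ≥ i} d k / √(k+1)`. Writing `w` as the telescoping sum of its gaps `a_k = w_k - w_{k+1}`
(with `w_m = 0`), which are positive because `w` is strictly decreasing and positive, gives
`w = ∑ k, √(k+1) a_k • vk m k`. Dividing by the total weight `∑ k, √(k+1) a_k` turns this positive
combination into a convex one.
-/

open scoped BigOperators
noncomputable section

open Finset

def natExtend {m : ℕ} (w : Fin m → ℝ) (n : ℕ) : ℝ :=
  if h : n < m then w ⟨n, h⟩ else 0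

def successiveGap {m : ℕ} (w : Fin m → ℝ) (n : ℕ) : ℝ :=
  natExtend w n - natExtend w (n + 1)

theorem successiveGap_pos {m : ℕ} {w : Fin m → ℝ} (hw : StrictAnti w) (hpos : ∀ i, 0 < w i)
    {n : ℕ} (hn : n < m) : 0 < successiveGap w n := by
  rw [successiveGap, natExtend, natExtend, dif_pos hn]
  split_ifs
  · exact sub_pos.2 (hw (Fin.mk_lt_mk.2 n.lt_succ_self))
  · simpa using hpos ⟨n, hn⟩

theorem sum_Ico_successiveGap {m : ℕ} (w : Fin m → ℝ) (i : Fin m) :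
    ∑ n ∈ Ico (i : ℕ) m, successiveGap w n = w i := by
  have hm : natExtend w m = 0 := dif_neg (lt_irrefl m)
  have hi : natExtend w i = w i := dif_pos i.2
  calc ∑ n ∈ Ico (i : ℕ) m, successiveGap w n
      = -∑ n ∈ Ico (i : ℕ) m, (natExtend w (n + 1) - natExtend w n) := by
        simp only [successiveGap, ← sum_neg_distrib, neg_sub]
    _ = w i := by rw [sum_Ico_sub _ i.2.le, hm, hi, zero_sub, neg_neg]

theorem vk_sum_apply {m : ℕ} (c : ℕ → ℝ) (i : Fin m) :
    (∑ k : Fin m, c k • vk m k) i = ∑ n ∈ Ico (i : ℕ) m, c n / √(n + 1) := by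
  simp only [WithLp.ofLp_sum, Finset.sum_apply, PiLp.smul_apply, vk, smul_eq_mul, mul_ite,
    mul_zero, Fin.le_def, ← div_eq_mul_inv]
  rw [Fin.sum_univ_eq_sum_range (fun n => if (i : ℕ) ≤ n then c n / √(n + 1) else 0) m,
    ← sum_filter]
  congr 1
  ext n
  simp [and_comm]

theorem exists_pos_smul_eq_sum_of_pos {ι E : Type*} [Fintype ι] [Nonempty ι] [AddCommGroup E]
    [Module ℝ E] (v : ι → E) (d : ι → ℝ) (hd : ∀ k, 0 < d k) :
    ∃ t : ℝ, 0 < t ∧ ∃ c : ι → ℝ, (∀ k, 0 < c k) ∧ ∑ k, c k = 1 ∧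
      t • ∑ k, d k • v k = ∑ k, c k • v k := by
  have hs : 0 < ∑ k, d k := sum_pos (fun k _ => hd k) univ_nonempty
  refine ⟨(∑ k, d k)⁻¹, inv_pos.2 hs, fun k => (∑ k, d k)⁻¹ * d k,
    fun k => mul_pos (inv_pos.2 hs) (hd k), ?_, ?_⟩
  · rw [← mul_sum, inv_mul_cancel₀ hs.ne']
  · simp only [smul_sum, smul_smul]

theorem stmt8 (m : ℕ) (hm : 1 ≤ m) (w : EuclideanSpace ℝ (Fin m))
    (hdec : ∀ i j : Fin m, i < j → w j < w i) (hpos : ∀ i, 0 < w i) :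
    ∃ t : ℝ, 0 < t ∧ ∃ c : Fin m → ℝ, (∀ k, 0 < c k) ∧ ∑ k, c k = 1 ∧
      t • w = ∑ k : Fin m, c k • vk m k := by
  have : Nonempty (Fin m) := ⟨⟨0, hm⟩⟩
  let d : ℕ → ℝ := fun n => √(n + 1) * successiveGap w n
  have hw : w = ∑ k : Fin m, d k • vk m k := by
    ext i
    rw [vk_sum_apply, ← sum_Ico_successiveGap w i]
    refine sum_congr rfl fun n _ => ?_
    have : √((n : ℝ) + 1) ≠ 0 := by positivity
    simp only [d]
    field_simp
  rw [hw]
  exact exists_pos_smul_eq_sum_of_pos _ (fun k : Fin m => d k)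
    fun k => mul_pos (by positivity) (successiveGap_pos hdec hpos k.2)
end
end

section
/- The radius s_m of the largest ball centered at the origin contained in C_m = conv(B_m) satisfies s_m = (Σ_{k=1}^m 1/(√k + √(k−1))²)^{-1/2}. -/
open scoped BigOperators
noncomputable section

def s (m : ℕ) : ℝ :=
  sSup {r : ℝ | 0 ≤ r ∧ Metric.closedBall (0 : EuclideanSpace ℝ (Fin m)) r ⊆ convexHull ℝ (B m)}

/-!
Write `d j = √(j + 1) - √j = (√(j + 1) + √j)⁻¹` and `g = (d 0, …, d (m - 1))`; then `s m = ‖g‖⁻¹`.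

Since `d` is decreasing and its first `k` terms telescope to `√k`, every `v ∈ A m` satisfies
`⟪g, v⟫ ≤ √#(support v) = ‖v‖`, so `C m` lies in the half-space `⟪g, x⟫ ≤ 1`, which misses
`(r / ‖g‖) • g` as soon as `r > ‖g‖⁻¹`.

Conversely, let `W 0 ≥ W 1 ≥ ⋯` be the decreasing rearrangement of `|y i|`, `S k` the sum of its
first `k` terms and `M = max_k S k / √k`. Abel summation gives
`‖y‖² = ∑ S (j + 1) (W j - W (j + 1)) ≤ M ∑ √(j + 1) (W j - W (j + 1)) = M ∑ W j d j ≤ M ‖y‖ ‖g‖`,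
and the signed indicator of the `k` largest coordinates (`k` maximising) is a point `v ∈ A m`
with `⟪y, v / ‖v‖⟫ = M ≥ ‖y‖ / ‖g‖`. Hence no linear functional separates a point of the ball of
radius `‖g‖⁻¹` from `C m`.
-/

open Finset Real
open scoped RealInnerProductSpace

theorem Antitone.sum_le_sum_range_card {M : Type*} [AddCommMonoid M] [PartialOrder M]
    [IsOrderedAddMonoid M] {f : ℕ → M} (hf : Antitone f) (S : Finset ℕ) :
    ∑ i ∈ S, f i ≤ ∑ i ∈ range #S, f i := by
  induction S using Finset.induction_on_max with
  | empty => simp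
  | insert a S ha ih =>
    have haS : a ∉ S := fun h => lt_irrefl a (ha a h)
    have hcard : #S ≤ a := by
      simpa using card_le_card fun x hx => mem_range.2 (ha x hx)
    rw [sum_insert haS, card_insert_of_notMem haS, sum_range_succ, add_comm]
    exact add_le_add ih (hf hcard)

theorem sum_range_mul_sub_succ {R : Type*} [CommRing R] (f W : ℕ → R) (n : ℕ) :
    ∑ j ∈ range n, f (j + 1) * (W j - W (j + 1)) =
      ∑ j ∈ range n, W j * (f (j + 1) - f j) + f 0 * W 0 - f n * W n := by
  induction n with
  | zero => simp
  | succ n ih => rw [sum_range_succ, sum_range_succ, ih]; ring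

theorem closedBall_subset_of_forall_exists_inner_ge {E : Type*} [NormedAddCommGroup E]
    [InnerProductSpace ℝ E] [CompleteSpace E] {K : Set E} (hKconv : Convex ℝ K)
    (hKclosed : IsClosed K) {r : ℝ} (h : ∀ y, ∃ b ∈ K, r * ‖y‖ ≤ ⟪y, b⟫) :
    Metric.closedBall 0 r ⊆ K := by
  intro x hx
  by_contra hxK
  obtain ⟨f, t, hfK, hfx⟩ := geometric_hahn_banach_closed_point hKconv hKclosed hxK
  set y := (InnerProductSpace.toDual ℝ E).symm f
  have hy : ∀ z, ⟪y, z⟫ = f z := fun z => InnerProductSpace.toDual_symm_apply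
  obtain ⟨b, hbK, hb⟩ := h y
  have hxr : ‖x‖ ≤ r := mem_closedBall_zero_iff.1 hx
  refine lt_irrefl (r * ‖y‖) ?_
  calc r * ‖y‖ ≤ ⟪y, b⟫ := hb
    _ < t := (hy b).symm ▸ hfK b hbK
    _ < ⟪y, x⟫ := (hy x).symm ▸ hfx
    _ ≤ ‖y‖ * ‖x‖ := real_inner_le_norm y x
    _ ≤ r * ‖y‖ := by rw [mul_comm]; exact mul_le_mul_of_nonneg_right hxr (norm_nonneg y)

def sqrtGap (j : ℕ) : ℝ := √(j + 1) - √j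

theorem sqrtGap_eq_inv (j : ℕ) : sqrtGap j = (√(j + 1) + √j)⁻¹ := by
  refine eq_inv_of_mul_eq_one_left ?_
  rw [sqrtGap, mul_comm, ← sq_sub_sq, sq_sqrt (by positivity), sq_sqrt (by positivity)]
  ring

theorem sqrtGap_sq (k : ℕ) : sqrtGap k ^ 2 = 1 / (√(k + 1) + √k) ^ 2 := by
  rw [sqrtGap_eq_inv, inv_pow, one_div]

theorem sum_range_sqrtGap (k : ℕ) : ∑ j ∈ range k, sqrtGap j = √k := by
  simpa [sqrtGap] using sum_range_sub (fun j : ℕ => √(j : ℝ)) k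

theorem sqrtGap_antitone : Antitone sqrtGap := by
  refine antitone_nat_of_succ_le fun j => ?_
  simp only [sqrtGap_eq_inv]
  gcongr <;> simp

theorem sqrtGap_nonneg (j : ℕ) : 0 ≤ sqrtGap j := by
  rw [sqrtGap_eq_inv]; positivity

theorem sum_sqrtGap_le_sqrt_card (S : Finset ℕ) : ∑ j ∈ S, sqrtGap j ≤ √(#S) :=
  (sqrtGap_antitone.sum_le_sum_range_card S).trans_eq (sum_range_sqrtGap _)

theorem sum_sq_le_mul_sum_mul_sqrtGap {W : ℕ → ℝ} {m : ℕ} {M : ℝ} (hW : Antitone W)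
    (hWm : W m = 0) (hM : ∀ k ∈ Icc 1 m, ∑ j ∈ range k, W j ≤ M * √k) :
    ∑ j ∈ range m, W j ^ 2 ≤ M * ∑ j ∈ range m, W j * sqrtGap j := by
  set S : ℕ → ℝ := fun k => ∑ j ∈ range k, W j
  calc ∑ j ∈ range m, W j ^ 2 = ∑ j ∈ range m, S (j + 1) * (W j - W (j + 1)) := by
        rw [sum_range_mul_sub_succ S W m, hWm]
        simp [S, sum_range_succ, sq]
    _ ≤ ∑ j ∈ range m, M * √(j + 1 : ℕ) * (W j - W (j + 1)) := by
        refine sum_le_sum fun j hj => mul_le_mul_of_nonneg_right ?_ (sub_nonneg.2 (hW j.le_succ))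
        exact hM (j + 1) (by simp at hj ⊢; omega)
    _ = M * ∑ j ∈ range m, W j * sqrtGap j := by
        simp_rw [mul_assoc, ← mul_sum, sum_range_mul_sub_succ (fun j : ℕ => √(j : ℝ)), hWm]
        simp [sqrtGap]

section

variable {m : ℕ}

theorem finite_A (m : ℕ) : (A m).Finite := by
  refine ((Set.Finite.pi fun _ => Set.toFinite ({-1, 0, 1} : Set ℝ)).image
    (WithLp.toLp 2)).subset fun v hv => ⟨WithLp.ofLp v, fun i _ => ?_, rfl⟩
  rcases hv.1 i with h | h | h <;> simp [h]

theorem norm_eq_sqrt_card_of_mem_A {v : EuclideanSpace ℝ (Fin m)} (hv : v ∈ A m) :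
    ‖v‖ = √(#{i | v i ≠ 0}) := by
  rw [EuclideanSpace.norm_eq, card_filter]
  push_cast
  congr 1
  refine sum_congr rfl fun i _ => ?_
  rcases hv.1 i with h | h | h <;> simp [h]

def gapVec (m : ℕ) : EuclideanSpace ℝ (Fin m) := WithLp.toLp 2 fun i => sqrtGap i

theorem norm_gapVec (m : ℕ) : ‖gapVec m‖ = √(∑ j ∈ range m, sqrtGap j ^ 2) := by
  simp [EuclideanSpace.norm_eq, gapVec, Fin.sum_univ_eq_sum_range (fun j => sqrtGap j ^ 2)]

theorem norm_gapVec_pos (hm : 0 < m) : 0 < ‖gapVec m‖ := by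
  refine norm_pos_iff.2 fun h => ?_
  have := congrArg (fun x : EuclideanSpace ℝ (Fin m) => x ⟨0, hm⟩) h
  simp [gapVec, sqrtGap] at this

theorem inner_gapVec_le_norm_of_mem_A {v : EuclideanSpace ℝ (Fin m)} (hv : v ∈ A m) :
    ⟪gapVec m, v⟫ ≤ ‖v‖ := by
  set T : Finset (Fin m) := {i | v i ≠ 0}
  calc ⟪gapVec m, v⟫ = ∑ i : Fin m, sqrtGap i * v i := by
        simp [PiLp.inner_apply, gapVec, mul_comm]
    _ ≤ ∑ i ∈ T, sqrtGap i := by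
        rw [sum_filter]
        refine sum_le_sum fun i _ => ?_
        rcases hv.1 i with h | h | h <;> simp [h, sqrtGap_nonneg]
    _ = ∑ j ∈ T.map Fin.valEmbedding, sqrtGap j := by rw [sum_map]; rfl
    _ ≤ ‖v‖ := (sum_sqrtGap_le_sqrt_card _).trans_eq
        (by rw [card_map, norm_eq_sqrt_card_of_mem_A hv])

theorem exists_mem_A_inner_eq_sum_abs (y : EuclideanSpace ℝ (Fin m)) {T : Finset (Fin m)}
    (hT : T.Nonempty) : ∃ v ∈ A m, ‖v‖ = √(#T) ∧ ⟪y, v⟫ = ∑ i ∈ T, |y i| := by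
  set v : EuclideanSpace ℝ (Fin m) :=
    WithLp.toLp 2 fun i => if i ∈ T then (if y i < 0 then -1 else 1) else 0
  have hvA : v ∈ A m := by
    refine ⟨fun i => by simp only [v]; split_ifs <;> simp, fun h => ?_⟩
    obtain ⟨i, hi⟩ := hT
    have := congrArg (fun x : EuclideanSpace ℝ (Fin m) => x i) h
    simp only [v, hi, if_true] at this
    split_ifs at this <;> simp at this
  refine ⟨v, hvA, ?_, ?_⟩
  · rw [norm_eq_sqrt_card_of_mem_A hvA]
    congr 3
    ext i
    simp only [v, mem_filter, mem_univ, true_and]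
    split_ifs <;> simp_all
  · rw [PiLp.inner_apply, ← sum_subset (subset_univ T) fun i _ hi => by simp [v, hi]]
    refine sum_congr rfl fun i hi => ?_
    simp only [v, hi, if_true, RCLike.inner_apply, conj_trivial]
    split_ifs with h
    · rw [abs_of_neg h]; ring
    · rw [abs_of_nonneg (not_lt.1 h)]; ring

theorem exists_antitone_rearrangement_abs (y : EuclideanSpace ℝ (Fin m)) :
    ∃ W : ℕ → ℝ, Antitone W ∧ W m = 0 ∧ ∑ j ∈ range m, W j ^ 2 = ‖y‖ ^ 2 ∧
      ∀ k ≤ m, ∃ T : Finset (Fin m), #T = k ∧ ∑ i ∈ T, |y i| = ∑ j ∈ range k, W j := by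
  set σ := Tuple.sort fun i => -|y i|
  have hσ : Antitone fun i => |y (σ i)| := fun i j hij => by
    simpa using Tuple.monotone_sort (fun i => -|y i|) hij
  set W : ℕ → ℝ := fun j => if h : j < m then |y (σ ⟨j, h⟩)| else 0
  have hW : ∀ i : Fin m, W i = |y (σ i)| := fun i => dif_pos i.isLt
  refine ⟨W, antitone_nat_of_succ_le fun j => ?_, by simp [W], ?_, fun k hk => ?_⟩
  · by_cases hj : j + 1 < m
    · simpa [W, hj, Nat.lt_of_succ_lt hj] using hσ (Fin.mk_le_mk.2 j.le_succ)
    · simp only [W, dif_neg hj]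
      split_ifs <;> simp
  · rw [EuclideanSpace.norm_sq_eq, ← Fin.sum_univ_eq_sum_range (fun j => W j ^ 2),
      ← Equiv.sum_comp σ fun i => ‖y i‖ ^ 2]
    simp [hW]
  · refine ⟨univ.map ((Fin.castLEEmb hk).trans σ.toEmbedding), by simp, ?_⟩
    rw [sum_map, ← Fin.sum_univ_eq_sum_range]
    refine sum_congr rfl fun j _ => ?_
    simp [← hW]

theorem exists_mem_A_norm_mul_norm_le_inner (hm : 0 < m) (y : EuclideanSpace ℝ (Fin m)) :
    ∃ v ∈ A m, ‖y‖ * ‖v‖ ≤ ‖gapVec m‖ * ⟪y, v⟫ := by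
  obtain ⟨W, hW, hWm, hWsq, hT⟩ := exists_antitone_rearrangement_abs y
  have hA : ∀ k ∈ Icc 1 m, ∃ v ∈ A m, ‖v‖ = √k ∧ ⟪y, v⟫ = ∑ j ∈ range k, W j := by
    intro k hk
    obtain ⟨T, hTk, hTW⟩ := hT k (mem_Icc.1 hk).2
    have hTne : T.Nonempty := card_pos.1 (hTk ▸ (mem_Icc.1 hk).1)
    simpa [hTk, hTW] using exists_mem_A_inner_eq_sum_abs y hTne
  obtain ⟨k, hk, hmax⟩ := (Icc 1 m).exists_max_image (fun k => (∑ j ∈ range k, W j) / √k)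
    (Finset.nonempty_Icc.2 hm)
  have hk0 : 0 < √k := sqrt_pos.2 (by have := (mem_Icc.1 hk).1; positivity)
  set M := (∑ j ∈ range k, W j) / √k
  have hM0 : 0 ≤ M := div_nonneg (sum_nonneg fun j hj =>
    hWm ▸ hW (by have := (mem_Icc.1 hk).2; simp at hj; omega)) hk0.le
  have hM : ∀ k' ∈ Icc 1 m, ∑ j ∈ range k', W j ≤ M * √k' := fun k' hk' =>
    (div_le_iff₀ (sqrt_pos.2 (by have := (mem_Icc.1 hk').1; positivity))).1 (hmax k' hk')
  have hCS : ∑ j ∈ range m, W j * sqrtGap j ≤ ‖y‖ * ‖gapVec m‖ :=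
    (sum_mul_le_sqrt_mul_sqrt _ _ _).trans_eq
      (by rw [hWsq, sqrt_sq (norm_nonneg y), norm_gapVec])
  have hsq : ‖y‖ ^ 2 ≤ M * (‖y‖ * ‖gapVec m‖) :=
    hWsq ▸ (sum_sq_le_mul_sum_mul_sqrtGap hW hWm hM).trans (mul_le_mul_of_nonneg_left hCS hM0)
  have hy : ‖y‖ ≤ M * ‖gapVec m‖ := by
    nlinarith [norm_nonneg y, mul_nonneg hM0 (norm_nonneg (gapVec m))]
  obtain ⟨v, hvA, hvnorm, hvinner⟩ := hA k hk
  refine ⟨v, hvA, ?_⟩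
  calc ‖y‖ * ‖v‖ ≤ M * ‖gapVec m‖ * √k := by
        rw [hvnorm]; exact mul_le_mul_of_nonneg_right hy hk0.le
    _ = ‖gapVec m‖ * ⟪y, v⟫ := by
        rw [hvinner, mul_right_comm, div_mul_cancel₀ _ hk0.ne', mul_comm]

theorem closedBall_inv_norm_gapVec_subset_convexHull (hm : 0 < m) :
    Metric.closedBall 0 ‖gapVec m‖⁻¹ ⊆ convexHull ℝ (B m) := by
  refine closedBall_subset_of_forall_exists_inner_ge (convex_convexHull ℝ _)
    (((finite_A m).image _).isCompact_convexHull ℝ).isClosed fun y => ?_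
  obtain ⟨v, hvA, hv⟩ := exists_mem_A_norm_mul_norm_le_inner hm y
  have hv0 : 0 < ‖v‖ := norm_pos_iff.2 hvA.2
  refine ⟨‖v‖⁻¹ • v, subset_convexHull ℝ _ ⟨v, hvA, rfl⟩, ?_⟩
  rw [real_inner_smul_right, inv_mul_eq_div, inv_mul_eq_div,
    div_le_div_iff₀ (norm_gapVec_pos hm) hv0]
  linarith

theorem convexHull_B_subset_halfSpace (m : ℕ) :
    convexHull ℝ (B m) ⊆ {x | ⟪gapVec m, x⟫ ≤ 1} := by
  refine convexHull_min ?_ (convex_halfSpace_le (innerₛₗ ℝ (gapVec m)).isLinear 1)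
  rintro _ ⟨v, hv, rfl⟩
  show ⟪gapVec m, ‖v‖⁻¹ • v⟫ ≤ 1
  rw [real_inner_smul_right, inv_mul_le_iff₀ (norm_pos_iff.2 hv.2), mul_one]
  exact inner_gapVec_le_norm_of_mem_A hv

theorem le_inv_norm_gapVec_of_closedBall_subset (hm : 0 < m) {r : ℝ} (hr : 0 ≤ r)
    (h : Metric.closedBall 0 r ⊆ convexHull ℝ (B m)) : r ≤ ‖gapVec m‖⁻¹ := by
  have hg := norm_gapVec_pos hm
  have hx : (r / ‖gapVec m‖) • gapVec m ∈ Metric.closedBall 0 r := by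
    rw [mem_closedBall_zero_iff, norm_smul, norm_div, norm_norm, Real.norm_of_nonneg hr,
      div_mul_cancel₀ _ hg.ne']
  have : ⟪gapVec m, (r / ‖gapVec m‖) • gapVec m⟫ ≤ 1 := convexHull_B_subset_halfSpace m (h hx)
  rwa [real_inner_smul_right, real_inner_self_eq_norm_sq, sq, ← mul_assoc,
    div_mul_cancel₀ _ hg.ne', ← le_div_iff₀ hg, one_div] at this

end

theorem stmt11 (m : ℕ) (hm : 2 ≤ m) :
    s m = (Real.sqrt (∑ k ∈ Finset.range m, 1 / (Real.sqrt (k + 1) + Real.sqrt k) ^ 2))⁻¹ := by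
  have hm0 : 0 < m := by omega
  simp_rw [← sqrtGap_sq, ← norm_gapVec]
  exact IsGreatest.csSup_eq ⟨⟨by positivity, closedBall_inv_norm_gapVec_subset_convexHull hm0⟩,
    fun r hr => le_inv_norm_gapVec_of_closedBall_subset hm0 hr.1 hr.2⟩
end
end

section
/- For real numbers w_1 > w_2 > ⋯ > w_m > 0, the maximum over all v ∈ B_m of ⟨v, w⟩ is attained at one of the vectors v_k = (1/√k) Σ_{i=1}^k e_i, 1 ≤ k ≤ m. -/
open scoped RealInnerProductSpace BigOperators
noncomputable section

/-! A nonzero sign vector `u` with support `S` has norm `√#S`, and since `w` is positive,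
`⟪u, w⟫ ≤ ∑_{i ∈ S} w i`. As `w` is decreasing, this sum is at most the sum of the first `#S`
coordinates of `w`, which is `√#S • ⟪v_{#S}, w⟫`. So every point of `B m` is beaten by some `v_k`,
hence by the best of the finitely many `v_k`. -/

open Finset

section Rearrangement

variable {ι M : Type*} [AddCommMonoid M] [LinearOrder M] [IsOrderedAddMonoid M]

theorem Finset.sum_le_sum_of_forall_le_of_card_eq {P Q : Finset ι} {f : ι → M}
    (hPQ : ∀ y ∈ P, ∀ x ∈ Q, f y ≤ f x) (hcard : #P = #Q) :
    ∑ i ∈ P, f i ≤ ∑ i ∈ Q, f i := by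
  rcases P.eq_empty_or_nonempty with rfl | hP
  · rw [card_empty, eq_comm, card_eq_zero] at hcard
    simp [hcard]
  calc ∑ i ∈ P, f i ≤ #P • P.sup' hP f := P.sum_le_card_nsmul f _ fun y hy => le_sup' f hy
    _ = #Q • P.sup' hP f := by rw [hcard]
    _ ≤ ∑ i ∈ Q, f i := Q.card_nsmul_le_sum f _ fun x hx => sup'_le hP f fun y hy => hPQ y hy x hx

/-- Exchanging the elements of `S \ T` for those of `T \ S` trades each term for a larger one,
since everything outside the lower set `T` lies above everything inside it. -/
theorem Antitone.sum_le_sum_of_isLowerSet [LinearOrder ι] {w : ι → M} (hw : Antitone w)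
    {S T : Finset ι} (hT : IsLowerSet (T : Set ι)) (hcard : #S = #T) :
    ∑ i ∈ S, w i ≤ ∑ i ∈ T, w i := by
  classical
  have hsdiff : ∑ i ∈ S \ T, w i ≤ ∑ i ∈ T \ S, w i := by
    refine sum_le_sum_of_forall_le_of_card_eq (fun y hy x hx => hw ?_) (card_sdiff_comm hcard)
    rw [mem_sdiff] at hx hy
    exact le_of_not_ge fun hyx => hy.2 (hT hyx hx.1)
  rw [← sum_inter_add_sum_sdiff S T, ← sum_inter_add_sum_sdiff T S, inter_comm]
  exact add_le_add_right hsdiff _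

end Rearrangement

section SignVectors

variable {m : ℕ} {u : EuclideanSpace ℝ (Fin m)}

theorem norm_eq_sqrt_card_of_sign (hu : ∀ i, u i = -1 ∨ u i = 0 ∨ u i = 1) :
    ‖u‖ = Real.sqrt #{i | u i ≠ 0} := by
  rw [EuclideanSpace.norm_eq, ← sum_boole]
  congr 1
  refine sum_congr rfl fun i _ => ?_
  rcases hu i with h | h | h <;> simp [h]

theorem inner_le_sum_of_sign (hu : ∀ i, u i = -1 ∨ u i = 0 ∨ u i = 1)
    {w : EuclideanSpace ℝ (Fin m)} (hw : ∀ i, 0 < w i) :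
    ⟪u, w⟫ ≤ ∑ i ∈ {i | u i ≠ 0}, w i := by
  rw [PiLp.inner_apply, sum_filter]
  refine sum_le_sum fun i _ => ?_
  have := hw i
  rcases hu i with h | h | h <;> simp [h]; linarith

end SignVectors

theorem inner_vk (m : ℕ) (k : Fin m) (w : EuclideanSpace ℝ (Fin m)) :
    ⟪vk m k, w⟫ = (Real.sqrt ((k : ℕ) + 1))⁻¹ * ∑ i ∈ Iic k, w i := by
  simp [vk, PiLp.inner_apply, mul_sum, ← filter_ge_eq_Iic, sum_filter, mul_comm]

theorem exists_inner_le_inner_vk {m : ℕ} {w : EuclideanSpace ℝ (Fin m)}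
    (hdec : ∀ i j : Fin m, i < j → w j < w i) (hpos : ∀ i, 0 < w i)
    {v : EuclideanSpace ℝ (Fin m)} (hv : v ∈ B m) : ∃ k, ⟪v, w⟫ ≤ ⟪vk m k, w⟫ := by
  obtain ⟨u, ⟨hu, hu0⟩, rfl⟩ := hv
  set S : Finset (Fin m) := {i | u i ≠ 0}
  have hS : S.Nonempty := by
    obtain ⟨i, hi⟩ := Function.ne_iff.mp fun h => hu0 ((WithLp.ofLp_eq_zero 2).1 h)
    exact ⟨i, mem_filter.mpr ⟨mem_univ i, hi⟩⟩
  have hS_pos : 0 < #S := hS.card_pos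
  have hS_le : #S ≤ m := by simpa using card_le_univ S
  let k : Fin m := ⟨#S - 1, by omega⟩
  have hk : #S = (k : ℕ) + 1 := (Nat.sub_add_cancel hS_pos).symm
  refine ⟨k, ?_⟩
  have hsum : ∑ i ∈ S, w i ≤ ∑ i ∈ Iic k, w i :=
    (StrictAnti.antitone fun i j hij => hdec i j hij).sum_le_sum_of_isLowerSet
      (coe_Iic k ▸ isLowerSet_Iic k) (by rw [Fin.card_Iic, hk])
  rw [real_inner_smul_left, norm_eq_sqrt_card_of_sign hu, inner_vk, hk]
  push_cast
  gcongr
  exact (inner_le_sum_of_sign hu hpos).trans hsum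

theorem stmt17 (m : ℕ) (hm : 2 ≤ m) (w : EuclideanSpace ℝ (Fin m))
    (hdec : ∀ i j : Fin m, i < j → w j < w i) (hpos : ∀ i, 0 < w i) :
    ∃ k : Fin m, ∀ v ∈ B m, ⟪v, w⟫ ≤ ⟪vk m k, w⟫ := by
  have : Nonempty (Fin m) := ⟨⟨0, by omega⟩⟩
  obtain ⟨k, hk⟩ := Finite.exists_max fun k : Fin m => ⟪vk m k, w⟫
  refine ⟨k, fun v hv => ?_⟩
  obtain ⟨j, hj⟩ := exists_inner_le_inner_vk hdec hpos hv
  exact hj.trans (hk j)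
end
end
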